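/- arXiv:2402.13454 — 14 statements merged into one kernel-verified Lean document; each statement's English description precedes it below -/
import Mathlib

section
/- Suppose χ ≥ 1, 𝒯 \ A is nonempty, and β₄ < min(1, η·β₂), where β₄ = (1/|𝒯∖A|) · Σ_{i ∈ 𝒯∖A} min( max_{j ∈ A} s i j , η·β₂ ). Then χ ≥ ( I(A;𝒬) − |𝒰| · min(1, η·β₁) − |𝒯| · β₄ ) / ( min(1, η·β₂) − β₄ ). -/
open Finset

theorem stmt_0
    {ι : Type*} [Fintype ι] [DecidableEq ι]
    (s : ι → ι → ℝ)
    (hs : ∀ i j, s i j ∈ Set.Icc (0:ℝ) 1)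
    (hsymm : ∀ i j, s i j = s j i)
    (hself : ∀ i, s i i = 1)
    (T U Q : Finset ι)
    (hTU : Disjoint T U) (hTQ : Disjoint T Q) (hUQ : Disjoint U Q)
    (hQ : Q.Nonempty)
    (A : Finset ι) (hA : A.Nonempty) (hAsub : A ⊆ T ∪ U)
    (η : ℝ) (hη : 0 < η)
    (α₁ β₁ α₂ β₂ : ℝ)
    (hα₁ : ∀ i ∈ U, α₁ ≤ Q.sup' hQ (fun j => s i j))
    (hβ₁ : ∀ i ∈ U, Q.sup' hQ (fun j => s i j) ≤ β₁)
    (hα₂ : ∀ i ∈ T, α₂ ≤ Q.sup' hQ (fun j => s i j))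
    (hβ₂ : ∀ i ∈ T, Q.sup' hQ (fun j => s i j) ≤ β₂)
    (I : ℝ)
    (hI : I = ∑ i ∈ T ∪ U, min (A.sup' hA (fun j => s i j)) (η * Q.sup' hQ (fun j => s i j)))
    (hχ : 1 ≤ (A ∩ T).card)
    (hTA : (T \ A).Nonempty)
    (β₄ : ℝ)
    (hβ₄ : β₄ = ((T \ A).card : ℝ)⁻¹ *
      ∑ i ∈ T \ A, min (A.sup' hA (fun j => s i j)) (η * β₂))
    (hlt : β₄ < min 1 (η * β₂)) :
    ((A ∩ T).card : ℝ) ≥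
      (I - (U.card : ℝ) * min 1 (η * β₁) - (T.card : ℝ) * β₄) / (min 1 (η * β₂) - β₄) := by
  have hsup1 : ∀ i : ι, A.sup' hA (fun j => s i j) ≤ 1 := fun i =>
    Finset.sup'_le _ _ (fun j _ => (hs i j).2)
  -- U part
  have hUpart : ∀ i ∈ U, min (A.sup' hA (fun j => s i j)) (η * Q.sup' hQ (fun j => s i j))
      ≤ min 1 (η * β₁) := fun i hi =>
    min_le_min (hsup1 i) (mul_le_mul_of_nonneg_left (hβ₁ i hi) hη.le)
  -- A ∩ T part
  have hATpart : ∀ i ∈ A ∩ T, min (A.sup' hA (fun j => s i j)) (η * Q.sup' hQ (fun j => s i j))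
      ≤ min 1 (η * β₂) := fun i hi =>
    min_le_min (hsup1 i) (mul_le_mul_of_nonneg_left (hβ₂ i (Finset.mem_inter.1 hi).2) hη.le)
  -- T \ A part
  have hTApart : ∀ i ∈ T \ A, min (A.sup' hA (fun j => s i j)) (η * Q.sup' hQ (fun j => s i j))
      ≤ min (A.sup' hA (fun j => s i j)) (η * β₂) := fun i hi =>
    min_le_min le_rfl (mul_le_mul_of_nonneg_left (hβ₂ i (Finset.mem_sdiff.1 hi).1) hη.le)
  have hcardTA : (0:ℝ) < ((T \ A).card : ℝ) := by
    exact_mod_cast Finset.card_pos.2 hTA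
  have hsumTA : ∑ i ∈ T \ A, min (A.sup' hA (fun j => s i j)) (η * β₂)
      = ((T \ A).card : ℝ) * β₄ := by
    rw [hβ₄]; field_simp
  have hsplitT : ∑ i ∈ T, min (A.sup' hA (fun j => s i j)) (η * Q.sup' hQ (fun j => s i j))
      = (∑ i ∈ A ∩ T, min (A.sup' hA (fun j => s i j)) (η * Q.sup' hQ (fun j => s i j)))
        + ∑ i ∈ T \ A, min (A.sup' hA (fun j => s i j)) (η * Q.sup' hQ (fun j => s i j)) := by
    rw [Finset.inter_comm, Finset.sum_inter_add_sum_sdiff]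
  have hsumU : ∑ i ∈ T ∪ U, min (A.sup' hA (fun j => s i j)) (η * Q.sup' hQ (fun j => s i j))
      = (∑ i ∈ T, min (A.sup' hA (fun j => s i j)) (η * Q.sup' hQ (fun j => s i j)))
        + ∑ i ∈ U, min (A.sup' hA (fun j => s i j)) (η * Q.sup' hQ (fun j => s i j)) :=
    Finset.sum_union hTU
  have hIbound : I ≤ ((A ∩ T).card : ℝ) * min 1 (η * β₂)
      + ((T \ A).card : ℝ) * β₄ + (U.card : ℝ) * min 1 (η * β₁) := by
    rw [hI, hsumU, hsplitT]
    have h1 : ∑ i ∈ A ∩ T, min (A.sup' hA (fun j => s i j)) (η * Q.sup' hQ (fun j => s i j))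
        ≤ ((A ∩ T).card : ℝ) * min 1 (η * β₂) := by
      calc _ ≤ ∑ _i ∈ A ∩ T, min 1 (η * β₂) := Finset.sum_le_sum hATpart
        _ = ((A ∩ T).card : ℝ) * min 1 (η * β₂) := by rw [Finset.sum_const, nsmul_eq_mul]
    have h2 : ∑ i ∈ T \ A, min (A.sup' hA (fun j => s i j)) (η * Q.sup' hQ (fun j => s i j))
        ≤ ((T \ A).card : ℝ) * β₄ := by
      calc _ ≤ ∑ i ∈ T \ A, min (A.sup' hA (fun j => s i j)) (η * β₂) :=
          Finset.sum_le_sum hTApart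
        _ = _ := hsumTA
    have h3 : ∑ i ∈ U, min (A.sup' hA (fun j => s i j)) (η * Q.sup' hQ (fun j => s i j))
        ≤ (U.card : ℝ) * min 1 (η * β₁) := by
      calc _ ≤ ∑ _i ∈ U, min 1 (η * β₁) := Finset.sum_le_sum hUpart
        _ = _ := by rw [Finset.sum_const, nsmul_eq_mul]
    linarith
  have hcardsplit : ((T \ A).card : ℝ) + ((A ∩ T).card : ℝ) = (T.card : ℝ) := by
    have h : T \ (A ∩ T) = T \ A := by ext x; simp [Finset.mem_sdiff]
    have := Finset.card_sdiff_add_card_eq_card (Finset.inter_subset_right : A ∩ T ⊆ T)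
    rw [h] at this
    exact_mod_cast this
  rw [ge_iff_le, div_le_iff₀ (by linarith [hlt] : (0:ℝ) < min 1 (η * β₂) - β₄)]
  have hm : ((T \ A).card : ℝ) * β₄ + ((A ∩ T).card : ℝ) * β₄ = (T.card : ℝ) * β₄ := by
    rw [← hcardsplit]; ring
  nlinarith [hIbound, hm]
end

section
/- Suppose χ ≥ 1, 𝒯 \ A is nonempty, and α₄ < min(1, η·α₂), where α₄ = (1/|𝒯∖A|) · Σ_{i ∈ 𝒯∖A} min( max_{j ∈ A} s i j , η·α₂ ). Then χ ≤ ( I(A;𝒬) − |𝒯| · α₄ ) / ( min(1, η·α₂) − α₄ ). -/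
/-!
Every selected target `i ∈ A ∩ 𝒯` has `max_{j ∈ A} s i j = s i i = 1`, so its term in `I` is at
least `min(1, η α₂)`; the unselected targets contribute at least `α₄` on average, and the terms over
`𝒰` are nonnegative. Hence `I ≥ χ · min(1, η α₂) + (|𝒯| - χ) · α₄`, which rearranges to the bound.
-/

open Finset

theorem card_inter_le_div_sub_of_le {ι : Type*} [DecidableEq ι] (T A : Finset ι) (f : ι → ℝ)
    {m c : ℝ} (hm : ∀ i ∈ A ∩ T, m ≤ f i) (hc : #(T \ A) * c ≤ ∑ i ∈ T \ A, f i) (hcm : c < m) :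
    (#(A ∩ T) : ℝ) ≤ (∑ i ∈ T, f i - #T * c) / (m - c) := by
  have hinter : #(A ∩ T) * m ≤ ∑ i ∈ A ∩ T, f i := by
    simpa using card_nsmul_le_sum (A ∩ T) f m hm
  have hsplit : ∑ i ∈ A ∩ T, f i + ∑ i ∈ T \ A, f i = ∑ i ∈ T, f i := by
    rw [inter_comm, sum_inter_add_sum_sdiff]
  have hcard : (#(T \ A) : ℝ) + #(A ∩ T) = #T := by
    rw [inter_comm]; exact_mod_cast card_sdiff_add_card_inter T A
  rw [le_div_iff₀ (sub_pos.mpr hcm), ← hcard]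
  linarith

theorem one_le_sup'_of_mem {ι : Type*} {s : ι → ι → ℝ} (hself : ∀ i, s i i = 1)
    {A : Finset ι} (hA : A.Nonempty) {i : ι} (hi : i ∈ A) : 1 ≤ A.sup' hA (s i) :=
  hself i ▸ le_sup' (s i) hi

theorem stmt_1_general
    {ι : Type*} [DecidableEq ι]
    (s : ι → ι → ℝ)
    (hs : ∀ i j, s i j ∈ Set.Icc (0:ℝ) 1)
    (hself : ∀ i, s i i = 1)
    (T U Q : Finset ι)
    (hQ : Q.Nonempty)
    (A : Finset ι) (hA : A.Nonempty)
    (η : ℝ) (hη : 0 < η)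
    (α₂ : ℝ)
    (hα₂ : ∀ i ∈ T, α₂ ≤ Q.sup' hQ (fun j => s i j))
    (I : ℝ)
    (hI : I = ∑ i ∈ T ∪ U, min (A.sup' hA (fun j => s i j)) (η * Q.sup' hQ (fun j => s i j)))
    (α₄ : ℝ)
    (hα₄ : α₄ = ((T \ A).card : ℝ)⁻¹ *
      ∑ i ∈ T \ A, min (A.sup' hA (fun j => s i j)) (η * α₂))
    (hlt : α₄ < min 1 (η * α₂)) :
    ((A ∩ T).card : ℝ) ≤
      (I - (T.card : ℝ) * α₄) / (min 1 (η * α₂) - α₄) := by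
  set f : ι → ℝ := fun i => min (A.sup' hA (fun j => s i j)) (η * Q.sup' hQ (fun j => s i j))
  have hf_nonneg (i : ι) : 0 ≤ f i := by
    obtain ⟨a, ha⟩ := hA
    obtain ⟨q, hq⟩ := hQ
    exact le_min (le_sup'_of_le _ ha (hs i a).1)
      (mul_nonneg hη.le (le_sup'_of_le _ hq (hs i q).1))
  have hT_le_I : ∑ i ∈ T, f i ≤ I :=
    hI ▸ sum_le_sum_of_subset_of_nonneg subset_union_left fun i _ _ => hf_nonneg i
  have hm : ∀ i ∈ A ∩ T, min 1 (η * α₂) ≤ f i := fun i hi =>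
    min_le_min (one_le_sup'_of_mem hself hA (mem_inter.mp hi).1)
      (mul_le_mul_of_nonneg_left (hα₂ i (mem_inter.mp hi).2) hη.le)
  have hc : #(T \ A) * α₄ ≤ ∑ i ∈ T \ A, f i := by
    rw [hα₄, ← div_eq_inv_mul, ← expect_eq_sum_div_card, card_mul_expect]
    exact sum_le_sum fun i hi =>
      min_le_min le_rfl (mul_le_mul_of_nonneg_left (hα₂ i (mem_sdiff.mp hi).1) hη.le)
  calc ((A ∩ T).card : ℝ)
      ≤ (∑ i ∈ T, f i - T.card * α₄) / (min 1 (η * α₂) - α₄) :=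
        card_inter_le_div_sub_of_le T A f hm hc hlt
    _ ≤ (I - T.card * α₄) / (min 1 (η * α₂) - α₄) := by
        gcongr

theorem stmt_1
    {ι : Type*} [Fintype ι] [DecidableEq ι]
    (s : ι → ι → ℝ)
    (hs : ∀ i j, s i j ∈ Set.Icc (0:ℝ) 1)
    (hsymm : ∀ i j, s i j = s j i)
    (hself : ∀ i, s i i = 1)
    (T U Q : Finset ι)
    (hTU : Disjoint T U) (hTQ : Disjoint T Q) (hUQ : Disjoint U Q)
    (hQ : Q.Nonempty)
    (A : Finset ι) (hA : A.Nonempty) (hAsub : A ⊆ T ∪ U)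
    (η : ℝ) (hη : 0 < η)
    (α₁ β₁ α₂ β₂ : ℝ)
    (hα₁ : ∀ i ∈ U, α₁ ≤ Q.sup' hQ (fun j => s i j))
    (hβ₁ : ∀ i ∈ U, Q.sup' hQ (fun j => s i j) ≤ β₁)
    (hα₂ : ∀ i ∈ T, α₂ ≤ Q.sup' hQ (fun j => s i j))
    (hβ₂ : ∀ i ∈ T, Q.sup' hQ (fun j => s i j) ≤ β₂)
    (I : ℝ)
    (hI : I = ∑ i ∈ T ∪ U, min (A.sup' hA (fun j => s i j)) (η * Q.sup' hQ (fun j => s i j)))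
    (hχ : 1 ≤ (A ∩ T).card)
    (hTA : (T \ A).Nonempty)
    (α₄ : ℝ)
    (hα₄ : α₄ = ((T \ A).card : ℝ)⁻¹ *
      ∑ i ∈ T \ A, min (A.sup' hA (fun j => s i j)) (η * α₂))
    (hlt : α₄ < min 1 (η * α₂)) :
    ((A ∩ T).card : ℝ) ≤
      (I - (T.card : ℝ) * α₄) / (min 1 (η * α₂) - α₄) :=
  stmt_1_general s hs hself T U Q hQ A hA η hη α₂ hα₂ I hI α₄ hα₄ hlt
end

section
/- Suppose χ ≥ 1 and α₁ < α₂. Set α₃ = min_{i ∈ 𝒯} (1/|𝒬|) · Σ_{j ∈ 𝒬} s i j. Then χ ≤ ( I(A;𝒬) − η·B·α₁ − |𝒬|·α₃ ) / ( η·(α₂ − α₁) ). -/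
open Finset

theorem stmt_3
    {ι : Type*} [Fintype ι] [DecidableEq ι]
    (s : ι → ι → ℝ)
    (hs : ∀ i j, s i j ∈ Set.Icc (0:ℝ) 1)
    (hsymm : ∀ i j, s i j = s j i)
    (hself : ∀ i, s i i = 1)
    (T U Q : Finset ι)
    (hTU : Disjoint T U) (hTQ : Disjoint T Q) (hUQ : Disjoint U Q)
    (hQ : Q.Nonempty)
    (hT : T.Nonempty)
    (A : Finset ι) (hA : A.Nonempty) (hAsub : A ⊆ T ∪ U)
    (η : ℝ) (hη : 0 < η)
    (α₁ β₁ α₂ β₂ : ℝ)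
    (hα₁ : ∀ i ∈ U, α₁ ≤ Q.sup' hQ (fun j => s i j))
    (hβ₁ : ∀ i ∈ U, Q.sup' hQ (fun j => s i j) ≤ β₁)
    (hα₂ : ∀ i ∈ T, α₂ ≤ Q.sup' hQ (fun j => s i j))
    (hβ₂ : ∀ i ∈ T, Q.sup' hQ (fun j => s i j) ≤ β₂)
    (I : ℝ)
    (hI : I = ∑ i ∈ Q, A.sup' hA (fun j => s i j) + η * ∑ i ∈ A, Q.sup' hQ (fun j => s i j))
    (hχ : 1 ≤ (A ∩ T).card)
    (hα : α₁ < α₂)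
    (α₃ : ℝ)
    (hα₃ : α₃ = T.inf' hT (fun i => ((Q.card : ℝ))⁻¹ * ∑ j ∈ Q, s i j)) :
    ((A ∩ T).card : ℝ) ≤
      (I - η * (A.card : ℝ) * α₁ - (Q.card : ℝ) * α₃) / (η * (α₂ - α₁)) := by

  have hden : 0 < η * (α₂ - α₁) := mul_pos hη (by linarith)
  rw [le_div_iff₀ hden]
  obtain ⟨j₀, hj₀⟩ := Finset.card_pos.mp (by omega : 0 < (A ∩ T).card)
  have hj₀A : j₀ ∈ A := (Finset.mem_inter.mp hj₀).1
  have hj₀T : j₀ ∈ T := (Finset.mem_inter.mp hj₀).2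
  have hQpos : (0:ℝ) < Q.card := by exact_mod_cast Finset.card_pos.mpr hQ
  have h1 : (Q.card : ℝ) * α₃ ≤ ∑ i ∈ Q, A.sup' hA (fun j => s i j) := by
    have hb : α₃ ≤ (Q.card:ℝ)⁻¹ * ∑ j ∈ Q, s j₀ j := hα₃ ▸ Finset.inf'_le _ hj₀T
    have h2 : ∑ j ∈ Q, s j₀ j ≤ ∑ i ∈ Q, A.sup' hA (fun j => s i j) := by
      apply Finset.sum_le_sum
      intro i hi
      rw [hsymm]
      exact Finset.le_sup' (fun j => s i j) hj₀A
    calc (Q.card:ℝ) * α₃ ≤ (Q.card:ℝ) * ((Q.card:ℝ)⁻¹ * ∑ j ∈ Q, s j₀ j) :=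
          mul_le_mul_of_nonneg_left hb hQpos.le
      _ = ∑ j ∈ Q, s j₀ j := by field_simp
      _ ≤ _ := h2
  have hsplit : ∑ i ∈ A ∩ T, Q.sup' hQ (fun j => s i j)
      + ∑ i ∈ A \ T, Q.sup' hQ (fun j => s i j)
      = ∑ i ∈ A, Q.sup' hQ (fun j => s i j) := Finset.sum_inter_add_sum_sdiff A T _
  have h2a : ((A ∩ T).card : ℝ) * α₂ ≤ ∑ i ∈ A ∩ T, Q.sup' hQ (fun j => s i j) := by
    have := Finset.card_nsmul_le_sum (A ∩ T) (fun i => Q.sup' hQ (fun j => s i j)) α₂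
      (fun i hi => hα₂ i (Finset.mem_inter.mp hi).2)
    simpa [nsmul_eq_mul] using this
  have h2b : ((A \ T).card : ℝ) * α₁ ≤ ∑ i ∈ A \ T, Q.sup' hQ (fun j => s i j) := by
    have := Finset.card_nsmul_le_sum (A \ T) (fun i => Q.sup' hQ (fun j => s i j)) α₁
      (fun i hi => by
        rcases Finset.mem_union.mp (hAsub (Finset.mem_sdiff.mp hi).1) with h | h
        · exact absurd h (Finset.mem_sdiff.mp hi).2
        · exact hα₁ i h)
    simpa [nsmul_eq_mul] using this
  have hcard : ((A ∩ T).card : ℝ) + ((A \ T).card : ℝ) = (A.card : ℝ) := by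
    exact_mod_cast Finset.card_inter_add_card_sdiff A T
  have hmul := mul_le_mul_of_nonneg_left (add_le_add h2a h2b) hη.le
  have hc2 : η * (A.card : ℝ) * α₁
      = η * ((A ∩ T).card : ℝ) * α₁ + η * ((A \ T).card : ℝ) * α₁ := by
    rw [← hcard]; ring
  nlinarith [hmul, h1, hsplit, hc2]
end

section
/- Suppose Δ₁ < Δ₂. Then χ ≥ ( I(A;𝒬)/(2λ·|𝒬|) − B·Δ₁ ) / ( Δ₂ − Δ₁ ). -/
open Finset

theorem stmt_4
    {ι : Type*} [Fintype ι] [DecidableEq ι]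
    (s : ι → ι → ℝ)
    (hs : ∀ i j, s i j ∈ Set.Icc (0:ℝ) 1)
    (hsymm : ∀ i j, s i j = s j i)
    (hself : ∀ i, s i i = 1)
    (T U Q : Finset ι)
    (hTU : Disjoint T U) (hTQ : Disjoint T Q) (hUQ : Disjoint U Q)
    (hQ : Q.Nonempty)
    (A : Finset ι) (hA : A.Nonempty) (hAsub : A ⊆ T ∪ U)
    (γ₁ Δ₁ γ₂ Δ₂ : ℝ)
    (hγ₁ : ∀ i ∈ U, ∀ j ∈ Q, γ₁ ≤ s i j)
    (hΔ₁ : ∀ i ∈ U, ∀ j ∈ Q, s i j ≤ Δ₁)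
    (hγ₂ : ∀ i ∈ T, ∀ j ∈ Q, γ₂ ≤ s i j)
    (hΔ₂ : ∀ i ∈ T, ∀ j ∈ Q, s i j ≤ Δ₂)
    (lam : ℝ) (hlam : 0 < lam)
    (I : ℝ)
    (hI : I = 2 * lam * ∑ i ∈ A, ∑ j ∈ Q, s i j)
    (hΔ : Δ₁ < Δ₂) :
    ((A ∩ T).card : ℝ) ≥
      (I / (2 * lam * (Q.card : ℝ)) - (A.card : ℝ) * Δ₁) / (Δ₂ - Δ₁) := by
  have hQ0 : (0:ℝ) < (Q.card : ℝ) := by exact_mod_cast hQ.card_pos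
  set S := ∑ i ∈ A, ∑ j ∈ Q, s i j with hS
  have hsplit : (A ∩ T) ∪ (A \ T) = A := by
    ext x; simp only [Finset.mem_union, Finset.mem_inter, Finset.mem_sdiff]; tauto
  have hdisj : Disjoint (A ∩ T) (A \ T) := by
    simp only [Finset.disjoint_left, Finset.mem_inter, Finset.mem_sdiff, not_and, not_not]
    tauto
  have hsubU : A \ T ⊆ U := by
    intro x hx
    rcases Finset.mem_sdiff.mp hx with ⟨hxA, hxT⟩
    rcases Finset.mem_union.mp (hAsub hxA) with h | h
    · exact absurd h hxT
    · exact h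
  have hcard : (A.card : ℝ) = ((A ∩ T).card : ℝ) + ((A \ T).card : ℝ) := by
    have h := Finset.card_union_of_disjoint hdisj
    rw [hsplit] at h
    exact_mod_cast h
  have h1 : ∑ i ∈ A ∩ T, ∑ j ∈ Q, s i j ≤ ((A ∩ T).card : ℝ) * ((Q.card : ℝ) * Δ₂) := by
    have := Finset.sum_le_card_nsmul (A ∩ T) (fun i => ∑ j ∈ Q, s i j)
      ((Q.card : ℝ) * Δ₂) (fun i hi => by
        calc ∑ j ∈ Q, s i j ≤ ∑ _j ∈ Q, Δ₂ :=
              Finset.sum_le_sum (fun j hj => hΔ₂ i (Finset.mem_inter.mp hi).2 j hj)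
          _ = (Q.card : ℝ) * Δ₂ := by simp [mul_comm])
    simpa [nsmul_eq_mul] using this
  have h2 : ∑ i ∈ A \ T, ∑ j ∈ Q, s i j ≤ ((A \ T).card : ℝ) * ((Q.card : ℝ) * Δ₁) := by
    have := Finset.sum_le_card_nsmul (A \ T) (fun i => ∑ j ∈ Q, s i j)
      ((Q.card : ℝ) * Δ₁) (fun i hi => by
        calc ∑ j ∈ Q, s i j ≤ ∑ _j ∈ Q, Δ₁ :=
              Finset.sum_le_sum (fun j hj => hΔ₁ i (hsubU hi) j hj)
          _ = (Q.card : ℝ) * Δ₁ := by simp [mul_comm])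
    simpa [nsmul_eq_mul] using this
  have hSle : S ≤ ((A ∩ T).card : ℝ) * ((Q.card : ℝ) * Δ₂) +
      ((A \ T).card : ℝ) * ((Q.card : ℝ) * Δ₁) := by
    calc S = ∑ i ∈ (A ∩ T) ∪ (A \ T), ∑ j ∈ Q, s i j := by rw [hsplit]
      _ = _ := Finset.sum_union hdisj
      _ ≤ _ := add_le_add h1 h2
  have hIQ : I / (2 * lam * (Q.card : ℝ)) = S / (Q.card : ℝ) := by
    rw [hI]; field_simp
  rw [ge_iff_le, div_le_iff₀ (by linarith), hIQ, sub_le_iff_le_add,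
    div_le_iff₀ hQ0]
  have heq : (((A ∩ T).card : ℝ) * (Δ₂ - Δ₁) + (A.card : ℝ) * Δ₁) * (Q.card : ℝ)
      = ((A ∩ T).card : ℝ) * ((Q.card : ℝ) * Δ₂) + ((A \ T).card : ℝ) * ((Q.card : ℝ) * Δ₁) := by
    rw [hcard]; ring
  linarith [hSle]
end

section
/- Suppose γ₁ < γ₂. Then χ ≤ ( I(A;𝒬)/(2λ·|𝒬|) − B·γ₁ ) / ( γ₂ − γ₁ ). -/
/-!
`I(A;𝒬) / (2λ|𝒬|)` is the sum over `i ∈ A` of the mean similarity of `i` to the queries. That mean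
is at least `γ₁` for an untargeted and at least `γ₂ = γ₁ + (γ₂ - γ₁)` for a targeted instance, hence
`B γ₁ + χ (γ₂ - γ₁) ≤ I(A;𝒬) / (2λ|𝒬|)`.
-/

open Finset
open scoped BigOperators

theorem card_nsmul_add_card_inter_nsmul_sub_le_sum {ι M : Type*} [DecidableEq ι]
    [AddCommGroup M] [PartialOrder M] [IsOrderedAddMonoid M]
    {A T U : Finset ι} (hA : A ⊆ T ∪ U) {f : ι → M} {a b : M}
    (ha : ∀ i ∈ U, a ≤ f i) (hb : ∀ i ∈ T, b ≤ f i) :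
    #A • a + #(A ∩ T) • (b - a) ≤ ∑ i ∈ A, f i := by
  calc #A • a + #(A ∩ T) • (b - a) = ∑ i ∈ A, (a + if i ∈ T then b - a else 0) := by
        rw [sum_add_distrib, sum_ite_mem, sum_const, sum_const]
    _ ≤ ∑ i ∈ A, f i := by
        refine sum_le_sum fun i hi ↦ ?_
        split_ifs with hT
        · simpa using hb i hT
        · simpa using ha i ((mem_union.mp (hA hi)).resolve_left hT)

theorem stmt_5_general
    {ι : Type*} [DecidableEq ι]
    (s : ι → ι → ℝ)
    (T U Q : Finset ι)
    (hQ : Q.Nonempty)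
    (A : Finset ι) (hAsub : A ⊆ T ∪ U)
    (γ₁ γ₂ : ℝ)
    (hγ₁ : ∀ i ∈ U, ∀ j ∈ Q, γ₁ ≤ s i j)
    (hγ₂ : ∀ i ∈ T, ∀ j ∈ Q, γ₂ ≤ s i j)
    (lam : ℝ) (hlam : 0 < lam)
    (I : ℝ)
    (hI : I = 2 * lam * ∑ i ∈ A, ∑ j ∈ Q, s i j)
    (hγ : γ₁ < γ₂) :
    ((A ∩ T).card : ℝ) ≤
      (I / (2 * lam * (Q.card : ℝ)) - (A.card : ℝ) * γ₁) / (γ₂ - γ₁) := by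
  have hmean : I / (2 * lam * #Q) = ∑ i ∈ A, 𝔼 j ∈ Q, s i j := by
    simp only [hI, expect_eq_sum_div_card, ← sum_div]
    exact mul_div_mul_left _ _ (by positivity)
  have hbound := card_nsmul_add_card_inter_nsmul_sub_le_sum hAsub
    (fun i hi ↦ le_expect hQ (hγ₁ i hi)) (fun i hi ↦ le_expect hQ (hγ₂ i hi))
  rw [hmean, le_div_iff₀ (sub_pos.mpr hγ)]
  simp only [nsmul_eq_mul] at hbound
  linarith

theorem stmt_5
    {ι : Type*} [Fintype ι] [DecidableEq ι]
    (s : ι → ι → ℝ)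
    (hs : ∀ i j, s i j ∈ Set.Icc (0:ℝ) 1)
    (hsymm : ∀ i j, s i j = s j i)
    (hself : ∀ i, s i i = 1)
    (T U Q : Finset ι)
    (hTU : Disjoint T U) (hTQ : Disjoint T Q) (hUQ : Disjoint U Q)
    (hQ : Q.Nonempty)
    (A : Finset ι) (hA : A.Nonempty) (hAsub : A ⊆ T ∪ U)
    (γ₁ Δ₁ γ₂ Δ₂ : ℝ)
    (hγ₁ : ∀ i ∈ U, ∀ j ∈ Q, γ₁ ≤ s i j)
    (hΔ₁ : ∀ i ∈ U, ∀ j ∈ Q, s i j ≤ Δ₁)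
    (hγ₂ : ∀ i ∈ T, ∀ j ∈ Q, γ₂ ≤ s i j)
    (hΔ₂ : ∀ i ∈ T, ∀ j ∈ Q, s i j ≤ Δ₂)
    (lam : ℝ) (hlam : 0 < lam)
    (I : ℝ)
    (hI : I = 2 * lam * ∑ i ∈ A, ∑ j ∈ Q, s i j)
    (hγ : γ₁ < γ₂) :
    ((A ∩ T).card : ℝ) ≤
      (I / (2 * lam * (Q.card : ℝ)) - (A.card : ℝ) * γ₁) / (γ₂ - γ₁) :=
  stmt_5_general s T U Q hQ A hAsub γ₁ γ₂ hγ₁ hγ₂ lam hlam I hI hγ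
end

section
/- It holds that I(A;𝒬) ≤ η·χ·ψ(|𝒬|·Δ₂) + η·(B − χ)·ψ(|𝒬|·Δ₁) + |𝒬|·ψ( χ·Δ₄ + (B − χ)·Δ₃ ). -/
open Finset

theorem stmt_7
    {ι : Type*} [Fintype ι] [DecidableEq ι]
    (s : ι → ι → ℝ)
    (hs : ∀ i j, s i j ∈ Set.Icc (0:ℝ) 1)
    (hsymm : ∀ i j, s i j = s j i)
    (hself : ∀ i, s i i = 1)
    (T U Q : Finset ι)
    (hTU : Disjoint T U) (hTQ : Disjoint T Q) (hUQ : Disjoint U Q)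
    (hQ : Q.Nonempty)
    (A : Finset ι) (hA : A.Nonempty) (hAsub : A ⊆ T ∪ U)
    (η : ℝ) (hη : 0 < η)
    (ψ : ℝ → ℝ) (hψ : StrictMono ψ) (hψc : ConcaveOn ℝ Set.univ ψ)
    (γ₁ Δ₁ γ₂ Δ₂ : ℝ)
    (hγ₁ : ∀ i ∈ U, ∀ j ∈ Q, γ₁ ≤ s i j)
    (hΔ₁ : ∀ i ∈ U, ∀ j ∈ Q, s i j ≤ Δ₁)
    (hγ₂ : ∀ i ∈ T, ∀ j ∈ Q, γ₂ ≤ s i j)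
    (hΔ₂ : ∀ i ∈ T, ∀ j ∈ Q, s i j ≤ Δ₂)
    (γ₃ Δ₃ γ₄ Δ₄ : ℝ)
    (hγ₃ : ∀ i ∈ Q, ∀ j ∈ A ∩ U, γ₃ ≤ s i j)
    (hΔ₃ : ∀ i ∈ Q, ∀ j ∈ A ∩ U, s i j ≤ Δ₃)
    (hγ₄ : ∀ i ∈ Q, ∀ j ∈ A ∩ T, γ₄ ≤ s i j)
    (hΔ₄ : ∀ i ∈ Q, ∀ j ∈ A ∩ T, s i j ≤ Δ₄)
    (I : ℝ)
    (hI : I = η * ∑ i ∈ A, ψ (∑ j ∈ Q, s i j) + ∑ i ∈ Q, ψ (∑ j ∈ A, s i j))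
    :
    I ≤ η * ((A ∩ T).card : ℝ) * ψ ((Q.card : ℝ) * Δ₂)
      + η * ((A.card : ℝ) - ((A ∩ T).card : ℝ)) * ψ ((Q.card : ℝ) * Δ₁)
      + (Q.card : ℝ) * ψ (((A ∩ T).card : ℝ) * Δ₄ + ((A.card : ℝ) - ((A ∩ T).card : ℝ)) * Δ₃) := by
  have hdisj : Disjoint (A ∩ T) (A ∩ U) :=
    hTU.mono (inter_subset_right) (inter_subset_right)
  have hsplit : A ∩ T ∪ A ∩ U = A := by
    rw [← Finset.inter_union_distrib_left]
    exact Finset.inter_eq_left.mpr hAsub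
  have hcard : ((A ∩ T).card : ℝ) + ((A ∩ U).card : ℝ) = (A.card : ℝ) := by
    rw [← Nat.cast_add, ← Finset.card_union_of_disjoint hdisj, hsplit]
  have hcardU : ((A ∩ U).card : ℝ) = (A.card : ℝ) - ((A ∩ T).card : ℝ) := by
    linarith
  have h1 : ∑ i ∈ A ∩ T, ψ (∑ j ∈ Q, s i j) ≤ ((A ∩ T).card : ℝ) * ψ ((Q.card : ℝ) * Δ₂) := by
    rw [← nsmul_eq_mul]
    apply Finset.sum_le_card_nsmul
    intro i hi
    apply hψ.monotone
    calc ∑ j ∈ Q, s i j ≤ ∑ j ∈ Q, Δ₂ :=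
          Finset.sum_le_sum fun j hj => hΔ₂ i (Finset.mem_inter.mp hi).2 j hj
      _ = (Q.card : ℝ) * Δ₂ := by rw [Finset.sum_const, nsmul_eq_mul]
  have h2 : ∑ i ∈ A ∩ U, ψ (∑ j ∈ Q, s i j) ≤ ((A ∩ U).card : ℝ) * ψ ((Q.card : ℝ) * Δ₁) := by
    rw [← nsmul_eq_mul]
    apply Finset.sum_le_card_nsmul
    intro i hi
    apply hψ.monotone
    calc ∑ j ∈ Q, s i j ≤ ∑ j ∈ Q, Δ₁ :=
          Finset.sum_le_sum fun j hj => hΔ₁ i (Finset.mem_inter.mp hi).2 j hj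
      _ = (Q.card : ℝ) * Δ₁ := by rw [Finset.sum_const, nsmul_eq_mul]
  have h3 : ∑ i ∈ Q, ψ (∑ j ∈ A, s i j)
      ≤ (Q.card : ℝ) * ψ (((A ∩ T).card : ℝ) * Δ₄ + ((A.card : ℝ) - ((A ∩ T).card : ℝ)) * Δ₃) := by
    rw [← nsmul_eq_mul]
    apply Finset.sum_le_card_nsmul
    intro i hi
    apply hψ.monotone
    have : ∑ j ∈ A, s i j = ∑ j ∈ A ∩ T, s i j + ∑ j ∈ A ∩ U, s i j := by
      rw [← Finset.sum_union hdisj, hsplit]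
    rw [this, ← hcardU]
    have hT : ∑ j ∈ A ∩ T, s i j ≤ ((A ∩ T).card : ℝ) * Δ₄ := by
      calc ∑ j ∈ A ∩ T, s i j ≤ ∑ j ∈ A ∩ T, Δ₄ :=
            Finset.sum_le_sum fun j hj => hΔ₄ i hi j hj
        _ = ((A ∩ T).card : ℝ) * Δ₄ := by rw [Finset.sum_const, nsmul_eq_mul]
    have hU : ∑ j ∈ A ∩ U, s i j ≤ ((A ∩ U).card : ℝ) * Δ₃ := by
      calc ∑ j ∈ A ∩ U, s i j ≤ ∑ j ∈ A ∩ U, Δ₃ :=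
            Finset.sum_le_sum fun j hj => hΔ₃ i hi j hj
        _ = ((A ∩ U).card : ℝ) * Δ₃ := by rw [Finset.sum_const, nsmul_eq_mul]
    linarith
  have hsumA : ∑ i ∈ A, ψ (∑ j ∈ Q, s i j)
      = ∑ i ∈ A ∩ T, ψ (∑ j ∈ Q, s i j) + ∑ i ∈ A ∩ U, ψ (∑ j ∈ Q, s i j) := by
    rw [← Finset.sum_union hdisj, hsplit]
  rw [← hcardU] at h3
  rw [hI, hsumA, ← hcardU]
  nlinarith [hη.le, mul_le_mul_of_nonneg_left (add_le_add h1 h2) hη.le]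
end

section
/- It holds that I(A;𝒬) ≥ η·χ·ψ(|𝒬|·γ₂) + η·(B − χ)·ψ(|𝒬|·γ₁) + |𝒬|·ψ( χ·γ₄ + (B − χ)·γ₃ ). -/
open Finset

theorem stmt_8
    {ι : Type*} [Fintype ι] [DecidableEq ι]
    (s : ι → ι → ℝ)
    (hs : ∀ i j, s i j ∈ Set.Icc (0:ℝ) 1)
    (hsymm : ∀ i j, s i j = s j i)
    (hself : ∀ i, s i i = 1)
    (T U Q : Finset ι)
    (hTU : Disjoint T U) (hTQ : Disjoint T Q) (hUQ : Disjoint U Q)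
    (hQ : Q.Nonempty)
    (A : Finset ι) (hA : A.Nonempty) (hAsub : A ⊆ T ∪ U)
    (η : ℝ) (hη : 0 < η)
    (ψ : ℝ → ℝ) (hψ : StrictMono ψ) (hψc : ConcaveOn ℝ Set.univ ψ)
    (γ₁ Δ₁ γ₂ Δ₂ : ℝ)
    (hγ₁ : ∀ i ∈ U, ∀ j ∈ Q, γ₁ ≤ s i j)
    (hΔ₁ : ∀ i ∈ U, ∀ j ∈ Q, s i j ≤ Δ₁)
    (hγ₂ : ∀ i ∈ T, ∀ j ∈ Q, γ₂ ≤ s i j)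
    (hΔ₂ : ∀ i ∈ T, ∀ j ∈ Q, s i j ≤ Δ₂)
    (γ₃ Δ₃ γ₄ Δ₄ : ℝ)
    (hγ₃ : ∀ i ∈ Q, ∀ j ∈ A ∩ U, γ₃ ≤ s i j)
    (hΔ₃ : ∀ i ∈ Q, ∀ j ∈ A ∩ U, s i j ≤ Δ₃)
    (hγ₄ : ∀ i ∈ Q, ∀ j ∈ A ∩ T, γ₄ ≤ s i j)
    (hΔ₄ : ∀ i ∈ Q, ∀ j ∈ A ∩ T, s i j ≤ Δ₄)
    (I : ℝ)
    (hI : I = η * ∑ i ∈ A, ψ (∑ j ∈ Q, s i j) + ∑ i ∈ Q, ψ (∑ j ∈ A, s i j))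
    :
    I ≥ η * ((A ∩ T).card : ℝ) * ψ ((Q.card : ℝ) * γ₂)
      + η * ((A.card : ℝ) - ((A ∩ T).card : ℝ)) * ψ ((Q.card : ℝ) * γ₁)
      + (Q.card : ℝ) * ψ (((A ∩ T).card : ℝ) * γ₄ + ((A.card : ℝ) - ((A ∩ T).card : ℝ)) * γ₃) := by
  classical
  have hAeq : (A ∩ T) ∪ (A ∩ U) = A := by
    rw [← Finset.inter_union_distrib_left]
    exact Finset.inter_eq_left.mpr hAsub
  have hdisj : Disjoint (A ∩ T) (A ∩ U) :=
    hTU.mono Finset.inter_subset_right Finset.inter_subset_right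
  have hcard : ((A ∩ U).card : ℝ) = (A.card : ℝ) - ((A ∩ T).card : ℝ) := by
    have h := Finset.card_union_of_disjoint hdisj
    rw [hAeq] at h
    have : (A.card : ℝ) = ((A ∩ T).card : ℝ) + ((A ∩ U).card : ℝ) := by
      exact_mod_cast h
    linarith
  -- first sum bound
  have h1 : ∀ i ∈ A ∩ T, ψ ((Q.card : ℝ) * γ₂) ≤ ψ (∑ j ∈ Q, s i j) := by
    intro i hi
    apply hψ.monotone
    calc (Q.card : ℝ) * γ₂ = ∑ _j ∈ Q, γ₂ := by
          rw [Finset.sum_const, nsmul_eq_mul]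
      _ ≤ ∑ j ∈ Q, s i j :=
          Finset.sum_le_sum fun j hj => hγ₂ i (Finset.mem_of_mem_inter_right hi) j hj
  have h2 : ∀ i ∈ A ∩ U, ψ ((Q.card : ℝ) * γ₁) ≤ ψ (∑ j ∈ Q, s i j) := by
    intro i hi
    apply hψ.monotone
    calc (Q.card : ℝ) * γ₁ = ∑ _j ∈ Q, γ₁ := by
          rw [Finset.sum_const, nsmul_eq_mul]
      _ ≤ ∑ j ∈ Q, s i j :=
          Finset.sum_le_sum fun j hj => hγ₁ i (Finset.mem_of_mem_inter_right hi) j hj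
  have hS1 : ((A ∩ T).card : ℝ) * ψ ((Q.card : ℝ) * γ₂)
      + ((A ∩ U).card : ℝ) * ψ ((Q.card : ℝ) * γ₁)
      ≤ ∑ i ∈ A, ψ (∑ j ∈ Q, s i j) := by
    have hsum : ∑ i ∈ A, ψ (∑ j ∈ Q, s i j)
        = ∑ i ∈ A ∩ T, ψ (∑ j ∈ Q, s i j) + ∑ i ∈ A ∩ U, ψ (∑ j ∈ Q, s i j) := by
      rw [← Finset.sum_union hdisj, hAeq]
    rw [hsum]
    gcongr
    · calc ((A ∩ T).card : ℝ) * ψ ((Q.card : ℝ) * γ₂)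
          = ∑ _i ∈ A ∩ T, ψ ((Q.card : ℝ) * γ₂) := by
            rw [Finset.sum_const, nsmul_eq_mul]
        _ ≤ ∑ i ∈ A ∩ T, ψ (∑ j ∈ Q, s i j) := Finset.sum_le_sum h1
    · calc ((A ∩ U).card : ℝ) * ψ ((Q.card : ℝ) * γ₁)
          = ∑ _i ∈ A ∩ U, ψ ((Q.card : ℝ) * γ₁) := by
            rw [Finset.sum_const, nsmul_eq_mul]
        _ ≤ ∑ i ∈ A ∩ U, ψ (∑ j ∈ Q, s i j) := Finset.sum_le_sum h2
  -- second sum bound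
  have h3 : ∀ i ∈ Q, ψ (((A ∩ T).card : ℝ) * γ₄ + ((A ∩ U).card : ℝ) * γ₃)
      ≤ ψ (∑ j ∈ A, s i j) := by
    intro i hi
    apply hψ.monotone
    have hsum : ∑ j ∈ A, s i j = ∑ j ∈ A ∩ T, s i j + ∑ j ∈ A ∩ U, s i j := by
      rw [← Finset.sum_union hdisj, hAeq]
    rw [hsum]
    gcongr
    · calc ((A ∩ T).card : ℝ) * γ₄ = ∑ _j ∈ A ∩ T, γ₄ := by
            rw [Finset.sum_const, nsmul_eq_mul]
        _ ≤ ∑ j ∈ A ∩ T, s i j := Finset.sum_le_sum fun j hj => hγ₄ i hi j hj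
    · calc ((A ∩ U).card : ℝ) * γ₃ = ∑ _j ∈ A ∩ U, γ₃ := by
            rw [Finset.sum_const, nsmul_eq_mul]
        _ ≤ ∑ j ∈ A ∩ U, s i j := Finset.sum_le_sum fun j hj => hγ₃ i hi j hj
  have hS2 : (Q.card : ℝ) * ψ (((A ∩ T).card : ℝ) * γ₄ + ((A ∩ U).card : ℝ) * γ₃)
      ≤ ∑ i ∈ Q, ψ (∑ j ∈ A, s i j) := by
    calc (Q.card : ℝ) * ψ (((A ∩ T).card : ℝ) * γ₄ + ((A ∩ U).card : ℝ) * γ₃)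
        = ∑ _i ∈ Q, ψ (((A ∩ T).card : ℝ) * γ₄ + ((A ∩ U).card : ℝ) * γ₃) := by
          rw [Finset.sum_const, nsmul_eq_mul]
      _ ≤ ∑ i ∈ Q, ψ (∑ j ∈ A, s i j) := Finset.sum_le_sum h3
  rw [hI]
  rw [← hcard]
  nlinarith [mul_le_mul_of_nonneg_left hS1 hη.le]
end

section
/- Suppose 1 ≤ χ < B and χ < |𝒯|. Then δ^{𝒯∖A} ≥ ( I(A;𝒬) − |𝒰|·min(η·β₁, 1) − χ·min(η·β₂, 1) + 𝒪 ) / ( |𝒯| − χ ). -/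
open Finset

theorem stmt_9
    {ι : Type*} [Fintype ι] [DecidableEq ι]
    (s : ι → ι → ℝ)
    (hs : ∀ i j, s i j ∈ Set.Icc (0:ℝ) 1)
    (hsymm : ∀ i j, s i j = s j i)
    (hself : ∀ i, s i i = 1)
    (T U Q : Finset ι)
    (hTU : Disjoint T U) (hTQ : Disjoint T Q) (hUQ : Disjoint U Q)
    (hQ : Q.Nonempty)
    (A : Finset ι) (hA : A.Nonempty) (hAsub : A ⊆ T ∪ U)
    (η : ℝ) (hη : 0 < η)
    (α₁ β₁ α₂ β₂ : ℝ)
    (hα₁ : ∀ i ∈ U, α₁ ≤ Q.sup' hQ (fun j => s i j))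
    (hβ₁ : ∀ i ∈ U, Q.sup' hQ (fun j => s i j) ≤ β₁)
    (hα₂ : ∀ i ∈ T, α₂ ≤ Q.sup' hQ (fun j => s i j))
    (hβ₂ : ∀ i ∈ T, Q.sup' hQ (fun j => s i j) ≤ β₂)
    (I : ℝ)
    (hI : I = ∑ i ∈ T ∪ U, min (A.sup' hA (fun j => s i j)) (η * Q.sup' hQ (fun j => s i j)))
    (δ : ℝ)
    (hδ : δ = ((T \ A).card : ℝ)⁻¹ * ∑ i ∈ T \ A, A.sup' hA (fun j => s i j))
    (Osum : ℝ)
    (hOsum : Osum = ∑ i ∈ T \ A,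
      (if η * Q.sup' hQ (fun j => s i j) < A.sup' hA (fun j => s i j) then
        A.sup' hA (fun j => s i j) - η * Q.sup' hQ (fun j => s i j) else 0))
    (hχ : 1 ≤ (A ∩ T).card) (hχB : (A ∩ T).card < A.card) (hχT : (A ∩ T).card < T.card) :
    δ ≥ (I - (U.card : ℝ) * min (η * β₁) 1 - ((A ∩ T).card : ℝ) * min (η * β₂) 1 + Osum) /
      ((T.card : ℝ) - ((A ∩ T).card : ℝ)) := by

  set f : ι → ℝ := fun i => A.sup' hA (fun j => s i j) with hf
  set g : ι → ℝ := fun i => η * Q.sup' hQ (fun j => s i j) with hg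
  have hf1 : ∀ i, f i ≤ 1 := fun i => Finset.sup'_le hA _ (fun j _ => (hs i j).2)
  -- decompose the sum
  have hTsplit : T = (A ∩ T) ∪ (T \ A) := by
    rw [Finset.inter_comm, Finset.union_comm, Finset.sdiff_union_inter]
  have hdisj1 : Disjoint (A ∩ T) (T \ A) :=
    Finset.disjoint_left.mpr (fun i hi hi2 => (Finset.mem_sdiff.mp hi2).2 (Finset.mem_inter.mp hi).1)
  have hIsum : I = (∑ i ∈ A ∩ T, min (f i) (g i)) + (∑ i ∈ T \ A, min (f i) (g i))
      + ∑ i ∈ U, min (f i) (g i) := by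
    rw [hI, Finset.sum_union hTU]
    congr 1
    conv_lhs => rw [hTsplit]
    rw [Finset.sum_union hdisj1]
  -- bounds
  have hU : ∑ i ∈ U, min (f i) (g i) ≤ (U.card : ℝ) * min (η * β₁) 1 := by
    calc ∑ i ∈ U, min (f i) (g i) ≤ ∑ _i ∈ U, min (η * β₁) 1 := by
          apply Finset.sum_le_sum
          intro i hi
          exact le_min (le_trans (min_le_right _ _)
            (mul_le_mul_of_nonneg_left (hβ₁ i hi) hη.le))
            (le_trans (min_le_left _ _) (hf1 i))
      _ = (U.card : ℝ) * min (η * β₁) 1 := by rw [Finset.sum_const, nsmul_eq_mul]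
  have hAT : ∑ i ∈ A ∩ T, min (f i) (g i) ≤ ((A ∩ T).card : ℝ) * min (η * β₂) 1 := by
    calc ∑ i ∈ A ∩ T, min (f i) (g i) ≤ ∑ _i ∈ A ∩ T, min (η * β₂) 1 := by
          apply Finset.sum_le_sum
          intro i hi
          exact le_min (le_trans (min_le_right _ _)
            (mul_le_mul_of_nonneg_left (hβ₂ i (Finset.mem_inter.mp hi).2) hη.le))
            (le_trans (min_le_left _ _) (hf1 i))
      _ = ((A ∩ T).card : ℝ) * min (η * β₂) 1 := by rw [Finset.sum_const, nsmul_eq_mul]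
  have hTA : ∑ i ∈ T \ A, min (f i) (g i) = (∑ i ∈ T \ A, f i) - Osum := by
    rw [hOsum, ← Finset.sum_sub_distrib]
    apply Finset.sum_congr rfl
    intro i _
    by_cases h : g i < f i
    · rw [if_pos h, min_eq_right h.le]; ring
    · rw [if_neg h, min_eq_left (le_of_not_gt h)]; ring
  -- key inequality on the numerator
  have hnum : I - (U.card : ℝ) * min (η * β₁) 1 - ((A ∩ T).card : ℝ) * min (η * β₂) 1 + Osum
      ≤ ∑ i ∈ T \ A, f i := by
    rw [hIsum, hTA]; linarith
  -- cardinality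
  have hcard : ((T \ A).card : ℝ) = (T.card : ℝ) - ((A ∩ T).card : ℝ) := by
    have h1 : T \ A = T \ (T ∩ A) := by rw [Finset.sdiff_inter_self_left]
    have h2 : (T ∩ A).card ≤ T.card := Finset.card_le_card (Finset.inter_subset_left)
    rw [h1, Finset.card_sdiff_of_subset (Finset.inter_subset_left), Nat.cast_sub h2, Finset.inter_comm]
  have hpos : (0:ℝ) < (T.card : ℝ) - ((A ∩ T).card : ℝ) := by
    have := hχT
    push_cast
    exact sub_pos.mpr (by exact_mod_cast hχT)
  rw [ge_iff_le, div_le_iff₀ hpos, hδ, ← hcard]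
  have hcne : ((T \ A).card : ℝ) ≠ 0 := by rw [hcard]; exact ne_of_gt hpos
  rw [inv_mul_eq_div, div_mul_eq_mul_div, mul_div_assoc, div_self hcne, mul_one]
  exact hnum
end

section
/- Suppose 1 ≤ χ < B and χ < |𝒯|. Then δ^{𝒯∖A} ≤ ( I(A;𝒬) − (B − χ)·min(η·α₁, 1) − χ·min(η·α₂, 1) − (|𝒰| − B + χ)·min( max(Ω_𝒰, Ω_{𝒰𝒯}), η·α₁ ) + 𝒪 ) / ( |𝒯| − χ ). -/
/-!
Split `T ∪ U` into `T \ A`, `U \ A`, `A ∩ T` and `A \ T`. On `T \ A` each term of `I` is the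
coverage `max_{j ∈ A} s i j` minus its excess over `η · max_{j ∈ Q} s i j`, so the coverage summed
over `T \ A` is that part of `I` plus `𝒪`. The other terms of `I` are bounded below: coverage is
`1` on `A` since `s i i = 1`, and at least `max Ω_𝒰 Ω_{𝒰𝒯}` on `U \ A` because `A` meets both `U`
and `T`; the query term is at least `η α₁` on `U` and `η α₂` on `T`. Dividing by
`|T \ A| = |T| - χ` gives the bound.
-/

open Finset

section
variable {ι : Type*} {T U A : Finset ι}

lemma inf'_inf'_le_sup' {α : Type*} [LinearOrder α] {V : Finset ι} {s : ι → ι → α}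
    (hU : U.Nonempty) (hV : V.Nonempty) (hA : A.Nonempty) {i j : ι} (hi : i ∈ U) (hjV : j ∈ V)
    (hjA : j ∈ A) : U.inf' hU (fun i ↦ V.inf' hV (fun j ↦ s i j)) ≤ A.sup' hA (fun j ↦ s i j) :=
  inf'_le_of_le _ hi (inf'_le_of_le _ hjV (le_sup' _ hjA))

variable [DecidableEq ι]

lemma min_eq_sub_ite_lt {α : Type*} [AddCommGroup α] [LinearOrder α] (a b : α) :
    min a b = a - if b < a then a - b else 0 := by
  split_ifs with h
  · rw [min_eq_right h.le, sub_sub_cancel]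
  · rw [min_eq_left (not_lt.mp h), sub_zero]

lemma sum_union_eq_of_subset_union {M : Type*} [AddCommMonoid M] (hTU : Disjoint T U)
    (hA : A ⊆ T ∪ U) (h : ι → M) :
    ∑ i ∈ T ∪ U, h i =
      ∑ i ∈ T \ A, h i + ∑ i ∈ U \ A, h i + (∑ i ∈ A ∩ T, h i + ∑ i ∈ A \ T, h i) := by
  rw [← sum_sdiff hA, union_sdiff_distrib, sum_union (hTU.mono sdiff_subset sdiff_subset),
    sum_inter_add_sum_sdiff]

lemma cast_card_sdiff_eq_sub {R : Type*} [AddGroupWithOne R] (s t : Finset ι) :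
    (#(t \ s) : R) = #t - #(s ∩ t) := by
  rw [eq_sub_iff_add_eq, inter_comm, ← Nat.cast_add, card_sdiff_add_card_inter]

lemma cast_card_sdiff_of_subset_union {R : Type*} [AddGroupWithOne R] (hTU : Disjoint T U)
    (hA : A ⊆ T ∪ U) : (#(U \ A) : R) = #U - #(A \ T) := by
  rw [cast_card_sdiff_eq_sub, show A ∩ U = A \ T by grind [disjoint_left]]

lemma sum_sdiff_le_of_le_min {𝕜 : Type*} [Field 𝕜] [LinearOrder 𝕜] [IsStrictOrderedRing 𝕜]
    {f g : ι → 𝕜} {m₁ m₂ m₃ : 𝕜} (hTU : Disjoint T U) (hA : A ⊆ T ∪ U)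
    (h₁ : ∀ i ∈ A \ T, m₁ ≤ min (f i) (g i)) (h₂ : ∀ i ∈ A ∩ T, m₂ ≤ min (f i) (g i))
    (h₃ : ∀ i ∈ U \ A, m₃ ≤ min (f i) (g i)) :
    ∑ i ∈ T \ A, f i ≤
      ∑ i ∈ T ∪ U, min (f i) (g i) - #(A \ T) * m₁ - #(A ∩ T) * m₂ - #(U \ A) * m₃
        + ∑ i ∈ T \ A, (if g i < f i then f i - g i else 0) := by
  have hsplit := sum_union_eq_of_subset_union hTU hA fun i ↦ min (f i) (g i)
  have hTA : ∑ i ∈ T \ A, min (f i) (g i) =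
      ∑ i ∈ T \ A, f i - ∑ i ∈ T \ A, (if g i < f i then f i - g i else 0) := by
    simp_rw [min_eq_sub_ite_lt, sum_sub_distrib]
  have b₁ := card_nsmul_le_sum _ _ _ h₁
  have b₂ := card_nsmul_le_sum _ _ _ h₂
  have b₃ := card_nsmul_le_sum _ _ _ h₃
  simp only [nsmul_eq_mul] at b₁ b₂ b₃
  linarith

end

theorem stmt_10_general
    {ι : Type*} [DecidableEq ι]
    (s : ι → ι → ℝ)
    (hself : ∀ i, s i i = 1)
    (T U Q : Finset ι)
    (hTU : Disjoint T U)
    (hQ : Q.Nonempty)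
    (hT : T.Nonempty) (hU : U.Nonempty)
    (A : Finset ι) (hA : A.Nonempty) (hAsub : A ⊆ T ∪ U)
    (η : ℝ) (hη : 0 < η)
    (α₁ α₂ : ℝ)
    (hα₁ : ∀ i ∈ U, α₁ ≤ Q.sup' hQ (fun j => s i j))
    (hα₂ : ∀ i ∈ T, α₂ ≤ Q.sup' hQ (fun j => s i j))
    (I : ℝ)
    (hI : I = ∑ i ∈ T ∪ U, min (A.sup' hA (fun j => s i j)) (η * Q.sup' hQ (fun j => s i j)))
    (δ : ℝ)
    (hδ : δ = ((T \ A).card : ℝ)⁻¹ * ∑ i ∈ T \ A, A.sup' hA (fun j => s i j))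
    (Osum : ℝ)
    (hOsum : Osum = ∑ i ∈ T \ A,
      (if η * Q.sup' hQ (fun j => s i j) < A.sup' hA (fun j => s i j) then
        A.sup' hA (fun j => s i j) - η * Q.sup' hQ (fun j => s i j) else 0))
    (ΩU ΩUT : ℝ)
    (hΩU : ΩU = U.inf' hU (fun i => U.inf' hU (fun j => s i j)))
    (hΩUT : ΩUT = U.inf' hU (fun i => T.inf' hT (fun j => s i j)))
    (hχ : 1 ≤ (A ∩ T).card) (hχB : (A ∩ T).card < A.card) :
    δ ≤ (I - ((A.card : ℝ) - ((A ∩ T).card : ℝ)) * min (η * α₁) 1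
          - ((A ∩ T).card : ℝ) * min (η * α₂) 1
          - ((U.card : ℝ) - (A.card : ℝ) + ((A ∩ T).card : ℝ)) * min (max ΩU ΩUT) (η * α₁)
          + Osum) /
      ((T.card : ℝ) - ((A ∩ T).card : ℝ)) := by
  have hf₁ : ∀ i ∈ A, 1 ≤ A.sup' hA (fun j => s i j) := fun i hi ↦ le_sup'_of_le _ hi (hself i).ge
  obtain ⟨t, ht⟩ : (A ∩ T).Nonempty := card_pos.mp hχ
  obtain ⟨u, hu⟩ : (A \ T).Nonempty := by
    simpa only [sdiff_inter_self_left] using sdiff_nonempty_of_card_lt_card hχB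
  have hAU : A \ T ⊆ U := sdiff_le_iff.mpr hAsub
  have hfΩ : ∀ i ∈ U, max ΩU ΩUT ≤ A.sup' hA (fun j => s i j) := fun i hi ↦ max_le
    (hΩU ▸ inf'_inf'_le_sup' hU hU hA hi (hAU hu) (mem_sdiff.mp hu).1)
    (hΩUT ▸ inf'_inf'_le_sup' hU hT hA hi (mem_inter.mp ht).2 (mem_inter.mp ht).1)
  have key := sum_sdiff_le_of_le_min (m₁ := min (η * α₁) 1) (m₂ := min (η * α₂) 1)
    (m₃ := min (max ΩU ΩUT) (η * α₁)) hTU hAsub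
    (fun i hi ↦ (min_comm _ _).trans_le <| min_le_min (hf₁ i (mem_sdiff.mp hi).1)
      (mul_le_mul_of_nonneg_left (hα₁ i (hAU hi)) hη.le))
    (fun i hi ↦ (min_comm _ _).trans_le <| min_le_min (hf₁ i (mem_inter.mp hi).1)
      (mul_le_mul_of_nonneg_left (hα₂ i (mem_inter.mp hi).2) hη.le))
    (fun i hi ↦ min_le_min (hfΩ i (mem_sdiff.mp hi).1)
      (mul_le_mul_of_nonneg_left (hα₁ i (mem_sdiff.mp hi).1) hη.le))
  rw [cast_card_sdiff_of_subset_union hTU hAsub, cast_card_sdiff_eq_sub T A, inter_comm T A] at key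
  rw [hδ, hI, hOsum, ← cast_card_sdiff_eq_sub A T, inv_mul_eq_div]
  exact div_le_div_of_nonneg_right (key.trans_eq (by ring)) (Nat.cast_nonneg _)

theorem stmt_10
    {ι : Type*} [Fintype ι] [DecidableEq ι]
    (s : ι → ι → ℝ)
    (hs : ∀ i j, s i j ∈ Set.Icc (0:ℝ) 1)
    (hsymm : ∀ i j, s i j = s j i)
    (hself : ∀ i, s i i = 1)
    (T U Q : Finset ι)
    (hTU : Disjoint T U) (hTQ : Disjoint T Q) (hUQ : Disjoint U Q)
    (hQ : Q.Nonempty)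
    (hT : T.Nonempty) (hU : U.Nonempty)
    (A : Finset ι) (hA : A.Nonempty) (hAsub : A ⊆ T ∪ U)
    (η : ℝ) (hη : 0 < η)
    (α₁ β₁ α₂ β₂ : ℝ)
    (hα₁ : ∀ i ∈ U, α₁ ≤ Q.sup' hQ (fun j => s i j))
    (hβ₁ : ∀ i ∈ U, Q.sup' hQ (fun j => s i j) ≤ β₁)
    (hα₂ : ∀ i ∈ T, α₂ ≤ Q.sup' hQ (fun j => s i j))
    (hβ₂ : ∀ i ∈ T, Q.sup' hQ (fun j => s i j) ≤ β₂)
    (I : ℝ)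
    (hI : I = ∑ i ∈ T ∪ U, min (A.sup' hA (fun j => s i j)) (η * Q.sup' hQ (fun j => s i j)))
    (δ : ℝ)
    (hδ : δ = ((T \ A).card : ℝ)⁻¹ * ∑ i ∈ T \ A, A.sup' hA (fun j => s i j))
    (Osum : ℝ)
    (hOsum : Osum = ∑ i ∈ T \ A,
      (if η * Q.sup' hQ (fun j => s i j) < A.sup' hA (fun j => s i j) then
        A.sup' hA (fun j => s i j) - η * Q.sup' hQ (fun j => s i j) else 0))
    (ΩU ΩUT : ℝ)
    (hΩU : ΩU = U.inf' hU (fun i => U.inf' hU (fun j => s i j)))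
    (hΩUT : ΩUT = U.inf' hU (fun i => T.inf' hT (fun j => s i j)))
    (hχ : 1 ≤ (A ∩ T).card) (hχB : (A ∩ T).card < A.card) (hχT : (A ∩ T).card < T.card) :
    δ ≤ (I - ((A.card : ℝ) - ((A ∩ T).card : ℝ)) * min (η * α₁) 1
          - ((A ∩ T).card : ℝ) * min (η * α₂) 1
          - ((U.card : ℝ) - (A.card : ℝ) + ((A ∩ T).card : ℝ)) * min (max ΩU ΩUT) (η * α₁)
          + Osum) /
      ((T.card : ℝ) - ((A ∩ T).card : ℝ)) :=
  stmt_10_general s hself T U Q hTU hQ hT hU A hA hAsub η hη α₁ α₂ hα₁ hα₂ I hI δ hδ Osum hOsum ΩU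
    ΩUT hΩU hΩUT hχ hχB
end

section
/- Suppose χ ≥ 1. Then δ^𝒬 ≥ ( I(A;𝒬) − η·( χ·β₂ + (B − χ)·β₁ ) ) / |𝒬|. -/
open Finset

theorem stmt_11
    {ι : Type*} [Fintype ι] [DecidableEq ι]
    (s : ι → ι → ℝ)
    (hs : ∀ i j, s i j ∈ Set.Icc (0:ℝ) 1)
    (hsymm : ∀ i j, s i j = s j i)
    (hself : ∀ i, s i i = 1)
    (T U Q : Finset ι)
    (hTU : Disjoint T U) (hTQ : Disjoint T Q) (hUQ : Disjoint U Q)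
    (hQ : Q.Nonempty)
    (A : Finset ι) (hA : A.Nonempty) (hAsub : A ⊆ T ∪ U)
    (η : ℝ) (hη : 0 < η)
    (α₁ β₁ α₂ β₂ : ℝ)
    (hα₁ : ∀ i ∈ U, α₁ ≤ Q.sup' hQ (fun j => s i j))
    (hβ₁ : ∀ i ∈ U, Q.sup' hQ (fun j => s i j) ≤ β₁)
    (hα₂ : ∀ i ∈ T, α₂ ≤ Q.sup' hQ (fun j => s i j))
    (hβ₂ : ∀ i ∈ T, Q.sup' hQ (fun j => s i j) ≤ β₂)
    (I : ℝ)
    (hI : I = ∑ i ∈ Q, A.sup' hA (fun j => s i j) + η * ∑ i ∈ A, Q.sup' hQ (fun j => s i j))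
    (δ : ℝ)
    (hδ : δ = ((Q.card : ℝ))⁻¹ * ∑ i ∈ Q, A.sup' hA (fun j => s i j))
    (hχ : 1 ≤ (A ∩ T).card) :
    δ ≥ (I - η * (((A ∩ T).card : ℝ) * β₂ + ((A.card : ℝ) - ((A ∩ T).card : ℝ)) * β₁)) /
      (Q.card : ℝ) := by

  have hQpos : (0:ℝ) < Q.card := by
    exact_mod_cast Finset.card_pos.mpr hQ
  have hcard : ((A \ T).card : ℝ) = (A.card : ℝ) - ((A ∩ T).card : ℝ) := by
    have := Finset.card_inter_add_card_sdiff A T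
    have h' : (A ∩ T).card + (A \ T).card = A.card := this
    push_cast [← h']
    ring
  have h1 : ∑ i ∈ A ∩ T, Q.sup' hQ (fun j => s i j) ≤ ((A ∩ T).card : ℝ) * β₂ := by
    calc ∑ i ∈ A ∩ T, Q.sup' hQ (fun j => s i j) ≤ ∑ _i ∈ A ∩ T, β₂ := by
          apply Finset.sum_le_sum
          intro i hi
          exact hβ₂ i (Finset.mem_of_mem_inter_right hi)
      _ = ((A ∩ T).card : ℝ) * β₂ := by rw [Finset.sum_const, nsmul_eq_mul]
  have h2 : ∑ i ∈ A \ T, Q.sup' hQ (fun j => s i j) ≤ ((A \ T).card : ℝ) * β₁ := by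
    calc ∑ i ∈ A \ T, Q.sup' hQ (fun j => s i j) ≤ ∑ _i ∈ A \ T, β₁ := by
          apply Finset.sum_le_sum
          intro i hi
          rcases Finset.mem_sdiff.mp hi with ⟨hiA, hiT⟩
          rcases Finset.mem_union.mp (hAsub hiA) with h | h
          · exact absurd h hiT
          · exact hβ₁ i h
      _ = ((A \ T).card : ℝ) * β₁ := by rw [Finset.sum_const, nsmul_eq_mul]
  have hsplit : ∑ i ∈ A, Q.sup' hQ (fun j => s i j)
      = ∑ i ∈ A ∩ T, Q.sup' hQ (fun j => s i j) + ∑ i ∈ A \ T, Q.sup' hQ (fun j => s i j) :=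
    (Finset.sum_inter_add_sum_sdiff A T _).symm
  have hsum : ∑ i ∈ A, Q.sup' hQ (fun j => s i j)
      ≤ ((A ∩ T).card : ℝ) * β₂ + ((A.card : ℝ) - ((A ∩ T).card : ℝ)) * β₁ := by
    rw [hsplit, ← hcard]
    exact add_le_add h1 h2
  rw [ge_iff_le, div_le_iff₀ hQpos, hδ, inv_mul_eq_div, div_mul_cancel₀ _ (ne_of_gt hQpos), hI]
  nlinarith [hsum, hη.le]
end

section
/- Suppose χ ≥ 1. Then δ^𝒬 ≤ ( I(A;𝒬) − η·( χ·α₂ + (B − χ)·α₁ ) ) / |𝒬|. -/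
open Finset

lemma card_inter_mul_add_card_sdiff_mul_le_sum {ι : Type*} [DecidableEq ι] {A T U : Finset ι}
    (hAsub : A ⊆ T ∪ U) {g : ι → ℝ} {a b : ℝ}
    (hT : ∀ i ∈ T, a ≤ g i) (hU : ∀ i ∈ U, b ≤ g i) :
    (#(A ∩ T) : ℝ) * a + ((#A : ℝ) - #(A ∩ T)) * b ≤ ∑ i ∈ A, g i := by
  have hcard : (#A : ℝ) - #(A ∩ T) = #(A \ T) := by
    rw [← card_inter_add_card_sdiff A T]; push_cast; ring
  have hinter : #(A ∩ T) • a ≤ ∑ i ∈ A ∩ T, g i :=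
    card_nsmul_le_sum _ _ _ fun i hi => hT i (mem_inter.mp hi).2
  have hsdiff : #(A \ T) • b ≤ ∑ i ∈ A \ T, g i :=
    card_nsmul_le_sum _ _ _ fun i hi => by
      obtain ⟨hiA, hiT⟩ := mem_sdiff.mp hi
      exact hU i ((mem_union.mp (hAsub hiA)).resolve_left hiT)
  rw [hcard, ← sum_inter_add_sum_sdiff A T g]
  simp only [nsmul_eq_mul] at hinter hsdiff
  exact add_le_add hinter hsdiff

theorem stmt_12_general
    {ι : Type*} [DecidableEq ι]
    (s : ι → ι → ℝ)
    (T U Q : Finset ι)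
    (hQ : Q.Nonempty)
    (A : Finset ι) (hA : A.Nonempty) (hAsub : A ⊆ T ∪ U)
    (η : ℝ) (hη : 0 < η)
    (α₁ α₂ : ℝ)
    (hα₁ : ∀ i ∈ U, α₁ ≤ Q.sup' hQ (fun j => s i j))
    (hα₂ : ∀ i ∈ T, α₂ ≤ Q.sup' hQ (fun j => s i j))
    (I : ℝ)
    (hI : I = ∑ i ∈ Q, A.sup' hA (fun j => s i j) + η * ∑ i ∈ A, Q.sup' hQ (fun j => s i j))
    (δ : ℝ)
    (hδ : δ = ((Q.card : ℝ))⁻¹ * ∑ i ∈ Q, A.sup' hA (fun j => s i j)) :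
    δ ≤ (I - η * (((A ∩ T).card : ℝ) * α₂ + ((A.card : ℝ) - ((A ∩ T).card : ℝ)) * α₁)) /
      (Q.card : ℝ) := by
  have hquery := card_inter_mul_add_card_sdiff_mul_le_sum hAsub hα₂ hα₁
  rw [hδ, hI, div_eq_inv_mul]
  gcongr
  linarith [mul_le_mul_of_nonneg_left hquery hη.le]

theorem stmt_12
    {ι : Type*} [Fintype ι] [DecidableEq ι]
    (s : ι → ι → ℝ)
    (hs : ∀ i j, s i j ∈ Set.Icc (0:ℝ) 1)
    (hsymm : ∀ i j, s i j = s j i)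
    (hself : ∀ i, s i i = 1)
    (T U Q : Finset ι)
    (hTU : Disjoint T U) (hTQ : Disjoint T Q) (hUQ : Disjoint U Q)
    (hQ : Q.Nonempty)
    (A : Finset ι) (hA : A.Nonempty) (hAsub : A ⊆ T ∪ U)
    (η : ℝ) (hη : 0 < η)
    (α₁ β₁ α₂ β₂ : ℝ)
    (hα₁ : ∀ i ∈ U, α₁ ≤ Q.sup' hQ (fun j => s i j))
    (hβ₁ : ∀ i ∈ U, Q.sup' hQ (fun j => s i j) ≤ β₁)
    (hα₂ : ∀ i ∈ T, α₂ ≤ Q.sup' hQ (fun j => s i j))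
    (hβ₂ : ∀ i ∈ T, Q.sup' hQ (fun j => s i j) ≤ β₂)
    (I : ℝ)
    (hI : I = ∑ i ∈ Q, A.sup' hA (fun j => s i j) + η * ∑ i ∈ A, Q.sup' hQ (fun j => s i j))
    (δ : ℝ)
    (hδ : δ = ((Q.card : ℝ))⁻¹ * ∑ i ∈ Q, A.sup' hA (fun j => s i j))
    (hχ : 1 ≤ (A ∩ T).card) :
    δ ≤ (I - η * (((A ∩ T).card : ℝ) * α₂ + ((A.card : ℝ) - ((A ∩ T).card : ℝ)) * α₁)) /
      (Q.card : ℝ) :=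
  stmt_12_general s T U Q hQ A hA hAsub η hη α₁ α₂ hα₁ hα₂ I hI δ hδ
end

section
/- Suppose γ₁ ≥ 0 and γ₂ ≥ 0. Then δ^𝒬 ≤ I(A;𝒬)/(2λ·|𝒬|) − (B − 1)·γ₁ + γ₂ − χ·(γ₂ − γ₁). -/
open Finset

theorem stmt_14
    {ι : Type*} [Fintype ι] [DecidableEq ι]
    (s : ι → ι → ℝ)
    (hs : ∀ i j, s i j ∈ Set.Icc (0:ℝ) 1)
    (hsymm : ∀ i j, s i j = s j i)
    (hself : ∀ i, s i i = 1)
    (T U Q : Finset ι)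
    (hTU : Disjoint T U) (hTQ : Disjoint T Q) (hUQ : Disjoint U Q)
    (hQ : Q.Nonempty)
    (A : Finset ι) (hA : A.Nonempty) (hAsub : A ⊆ T ∪ U)
    (γ₁ Δ₁ γ₂ Δ₂ : ℝ)
    (hγ₁ : ∀ i ∈ U, ∀ j ∈ Q, γ₁ ≤ s i j)
    (hΔ₁ : ∀ i ∈ U, ∀ j ∈ Q, s i j ≤ Δ₁)
    (hγ₂ : ∀ i ∈ T, ∀ j ∈ Q, γ₂ ≤ s i j)
    (hΔ₂ : ∀ i ∈ T, ∀ j ∈ Q, s i j ≤ Δ₂)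
    (lam : ℝ) (hlam : 0 < lam)
    (I : ℝ)
    (hI : I = 2 * lam * ∑ i ∈ A, ∑ j ∈ Q, s i j)
    (δ : ℝ)
    (hδ : δ = ((Q.card : ℝ))⁻¹ * ∑ i ∈ Q, A.sup' hA (fun j => s i j))
    (hγ₁0 : 0 ≤ γ₁) (hγ₂0 : 0 ≤ γ₂) :
    δ ≤ I / (2 * lam * (Q.card : ℝ)) - ((A.card : ℝ) - 1) * γ₁ + γ₂
      - ((A ∩ T).card : ℝ) * (γ₂ - γ₁) := by
  have hQc : (0:ℝ) < (Q.card : ℝ) := by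
    exact_mod_cast Finset.card_pos.mpr hQ
  set C : ℝ := ((A.card : ℝ) - 1 - ((A ∩ T).card : ℝ)) * γ₁
      + (((A ∩ T).card : ℝ) - 1) * γ₂ with hC
  have key : ∀ i ∈ Q, A.sup' hA (fun j => s i j) ≤ (∑ j ∈ A, s i j) - C := by
    intro i hi
    obtain ⟨j₀, hj₀A, hj₀⟩ := Finset.exists_mem_eq_sup' hA (fun j => s i j)
    set E := A.erase j₀ with hEdef
    have hsplit : ∑ j ∈ A, s i j = s i j₀ + ∑ j ∈ E, s i j :=
      (Finset.add_sum_erase A _ hj₀A).symm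
    -- pointwise lower bound on E
    have hlow : ∀ j ∈ E, (if j ∈ T then γ₂ else γ₁) ≤ s i j := by
      intro j hj
      have hjA : j ∈ A := Finset.mem_of_mem_erase hj
      rcases Finset.mem_union.mp (hAsub hjA) with hT | hU
      · simpa [hT, hsymm i j] using hγ₂ j hT i hi
      · have hjT : j ∉ T := fun h => (Finset.disjoint_left.mp hTU h) hU
        simpa [hjT, hsymm i j] using hγ₁ j hU i hi
    have hsumE : ∑ j ∈ E, (if j ∈ T then γ₂ else γ₁) ≤ ∑ j ∈ E, s i j :=
      Finset.sum_le_sum hlow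
    have hEeval : ∑ j ∈ E, (if j ∈ T then γ₂ else γ₁)
        = ((E ∩ T).card : ℝ) * γ₂ + ((E ∩ U).card : ℝ) * γ₁ := by
      rw [Finset.sum_ite, Finset.sum_const, Finset.sum_const]
      have h1 : E.filter (· ∈ T) = E ∩ T := by
        ext x; simp [Finset.mem_filter, Finset.mem_inter]
      have h2 : E.filter (¬ · ∈ T) = E ∩ U := by
        ext x
        simp only [Finset.mem_filter, Finset.mem_inter]
        constructor
        · rintro ⟨hx, hxT⟩
          refine ⟨hx, ?_⟩
          rcases Finset.mem_union.mp (hAsub (Finset.mem_of_mem_erase hx)) with h | h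
          · exact absurd h hxT
          · exact h
        · rintro ⟨hx, hxU⟩
          exact ⟨hx, fun h => (Finset.disjoint_left.mp hTU h) hxU⟩
      rw [h1, h2]
      push_cast
      ring
    -- card facts
    have hcardE : (E.card : ℕ) + 1 = A.card := Finset.card_erase_add_one hj₀A
    have hcardsum : (E ∩ T).card + (E ∩ U).card = E.card := by
      have hdisj : Disjoint (E ∩ T) (E ∩ U) :=
        Disjoint.mono (Finset.inter_subset_right) (Finset.inter_subset_right) hTU
      rw [← Finset.card_union_of_disjoint hdisj]
      congr 1
      rw [← Finset.inter_union_distrib_left]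
      exact Finset.inter_eq_left.mpr (fun x hx => hAsub (Finset.mem_of_mem_erase hx))
    have hETle : (E ∩ T).card ≤ (A ∩ T).card :=
      Finset.card_le_card (Finset.inter_subset_inter (Finset.erase_subset _ _) le_rfl)
    have hATle : (A ∩ T).card ≤ (E ∩ T).card + 1 := by
      have hsub : A ∩ T ⊆ insert j₀ (E ∩ T) := by
        intro x hx
        rcases Finset.mem_inter.mp hx with ⟨hxA, hxT⟩
        by_cases hx0 : x = j₀
        · simp [hx0]
        · exact Finset.mem_insert_of_mem
            (Finset.mem_inter.mpr ⟨Finset.mem_erase.mpr ⟨hx0, hxA⟩, hxT⟩)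
      calc (A ∩ T).card ≤ (insert j₀ (E ∩ T)).card := Finset.card_le_card hsub
        _ ≤ (E ∩ T).card + 1 := Finset.card_insert_le _ _
    -- compare C with the actual counts
    have hCle : C ≤ ((E ∩ T).card : ℝ) * γ₂ + ((E ∩ U).card : ℝ) * γ₁ := by
      have hEU : ((E ∩ U).card : ℝ) = (A.card : ℝ) - 1 - ((E ∩ T).card : ℝ) := by
        have : ((E ∩ T).card : ℝ) + ((E ∩ U).card : ℝ) = (A.card : ℝ) - 1 := by
          have h := hcardsum
          have h2 := hcardE
          push_cast [← h2, ← h]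
          ring
        linarith
      have h1 : ((A ∩ T).card : ℝ) - 1 ≤ ((E ∩ T).card : ℝ) := by
        have : ((A ∩ T).card : ℝ) ≤ ((E ∩ T).card : ℝ) + 1 := by exact_mod_cast hATle
        linarith
      have h2 : ((E ∩ T).card : ℝ) ≤ ((A ∩ T).card : ℝ) := by exact_mod_cast hETle
      rw [hC, hEU]
      nlinarith
    have hmax : A.sup' hA (fun j => s i j) = s i j₀ := hj₀
    linarith [hsumE, hEeval ▸ hsumE]
  -- sum over queries
  have hsum : ∑ i ∈ Q, A.sup' hA (fun j => s i j)
      ≤ (∑ i ∈ Q, ∑ j ∈ A, s i j) - (Q.card : ℝ) * C := by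
    have := Finset.sum_le_sum key
    simpa [Finset.sum_sub_distrib, mul_comm] using this
  have hswap : ∑ i ∈ Q, ∑ j ∈ A, s i j = ∑ i ∈ A, ∑ j ∈ Q, s i j := by
    rw [Finset.sum_comm]
    exact Finset.sum_congr rfl fun i _ => Finset.sum_congr rfl fun j _ => (hsymm i j).symm
  have hIeq : I / (2 * lam * (Q.card : ℝ))
      = ((Q.card : ℝ))⁻¹ * ∑ i ∈ Q, ∑ j ∈ A, s i j := by
    rw [hI, hswap]
    field_simp
  have hfin : δ ≤ ((Q.card : ℝ))⁻¹ * ((∑ i ∈ Q, ∑ j ∈ A, s i j) - (Q.card : ℝ) * C) := by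
    rw [hδ]
    exact mul_le_mul_of_nonneg_left hsum (by positivity)
  have : ((Q.card : ℝ))⁻¹ * ((∑ i ∈ Q, ∑ j ∈ A, s i j) - (Q.card : ℝ) * C)
      = I / (2 * lam * (Q.card : ℝ)) - C := by
    rw [hIeq]
    field_simp
  rw [this] at hfin
  calc δ ≤ I / (2 * lam * (Q.card : ℝ)) - C := hfin
    _ = I / (2 * lam * (Q.card : ℝ)) - ((A.card : ℝ) - 1) * γ₁ + γ₂
      - ((A ∩ T).card : ℝ) * (γ₂ - γ₁) := by rw [hC]; ring
end

section
/- Suppose χ ≥ 1 and for each i ∈ 𝒬 the maximum max_{j ∈ A} s i j is attained at some element of A ∩ 𝒯. Then I(A;𝒬) ≤ η·( χ·ψ(|𝒬|·Δ₂) + (B − χ)·ψ(|𝒬|·Δ₁) ) + Σ_{i ∈ 𝒬} ψ( (χ − 1)·Δ₄ + (B − χ)·Δ₃ + max_{j ∈ A} s i j ). -/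
open Finset

theorem stmt_16
    {ι : Type*} [Fintype ι] [DecidableEq ι]
    (s : ι → ι → ℝ)
    (hs : ∀ i j, s i j ∈ Set.Icc (0:ℝ) 1)
    (hsymm : ∀ i j, s i j = s j i)
    (hself : ∀ i, s i i = 1)
    (T U Q : Finset ι)
    (hTU : Disjoint T U) (hTQ : Disjoint T Q) (hUQ : Disjoint U Q)
    (hQ : Q.Nonempty)
    (A : Finset ι) (hA : A.Nonempty) (hAsub : A ⊆ T ∪ U)
    (η : ℝ) (hη : 0 < η)
    (ψ : ℝ → ℝ) (hψ : StrictMono ψ) (hψc : ConcaveOn ℝ Set.univ ψ)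
    (γ₁ Δ₁ γ₂ Δ₂ : ℝ)
    (hγ₁ : ∀ i ∈ U, ∀ j ∈ Q, γ₁ ≤ s i j)
    (hΔ₁ : ∀ i ∈ U, ∀ j ∈ Q, s i j ≤ Δ₁)
    (hγ₂ : ∀ i ∈ T, ∀ j ∈ Q, γ₂ ≤ s i j)
    (hΔ₂ : ∀ i ∈ T, ∀ j ∈ Q, s i j ≤ Δ₂)
    (γ₃ Δ₃ γ₄ Δ₄ : ℝ)
    (hγ₃ : ∀ i ∈ Q, ∀ j ∈ A ∩ U, γ₃ ≤ s i j)
    (hΔ₃ : ∀ i ∈ Q, ∀ j ∈ A ∩ U, s i j ≤ Δ₃)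
    (hγ₄ : ∀ i ∈ Q, ∀ j ∈ A ∩ T, γ₄ ≤ s i j)
    (hΔ₄ : ∀ i ∈ Q, ∀ j ∈ A ∩ T, s i j ≤ Δ₄)
    (I : ℝ)
    (hI : I = η * ∑ i ∈ A, ψ (∑ j ∈ Q, s i j) + ∑ i ∈ Q, ψ (∑ j ∈ A, s i j))
    (hχ : 1 ≤ (A ∩ T).card)
    (hatt : ∀ i ∈ Q, ∃ k ∈ A ∩ T, s i k = A.sup' hA (fun j => s i j)) :
    I ≤ η * (((A ∩ T).card : ℝ) * ψ ((Q.card : ℝ) * Δ₂)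
          + ((A.card : ℝ) - ((A ∩ T).card : ℝ)) * ψ ((Q.card : ℝ) * Δ₁))
      + ∑ i ∈ Q, ψ ((((A ∩ T).card : ℝ) - 1) * Δ₄
          + ((A.card : ℝ) - ((A ∩ T).card : ℝ)) * Δ₃ + A.sup' hA (fun j => s i j)) := by
  have hAeq : A = (A ∩ T) ∪ (A ∩ U) := by
    rw [← Finset.inter_union_distrib_left]
    exact (Finset.inter_eq_left.mpr hAsub).symm
  have hd : Disjoint (A ∩ T) (A ∩ U) :=
    hTU.mono Finset.inter_subset_right Finset.inter_subset_right
  have hBn : (A ∩ T).card + (A ∩ U).card = A.card := by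
    rw [← Finset.card_union_of_disjoint hd, ← hAeq]
  have hcast : ((A.card : ℝ) - ((A ∩ T).card : ℝ)) = ((A ∩ U).card : ℝ) := by
    have := congrArg (Nat.cast : ℕ → ℝ) hBn
    push_cast at this
    linarith
  have h1T : ∑ i ∈ A ∩ T, ψ (∑ j ∈ Q, s i j)
      ≤ ((A ∩ T).card : ℝ) * ψ ((Q.card : ℝ) * Δ₂) := by
    have := Finset.sum_le_card_nsmul (A ∩ T) (fun i => ψ (∑ j ∈ Q, s i j))
      (ψ ((Q.card : ℝ) * Δ₂)) ?_
    · simpa [nsmul_eq_mul] using this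
    · intro i hi
      apply hψ.monotone
      calc ∑ j ∈ Q, s i j ≤ ∑ _j ∈ Q, Δ₂ :=
            Finset.sum_le_sum (fun j hj => hΔ₂ i (Finset.mem_inter.mp hi).2 j hj)
        _ = (Q.card : ℝ) * Δ₂ := by rw [Finset.sum_const, nsmul_eq_mul]
  have h1U : ∑ i ∈ A ∩ U, ψ (∑ j ∈ Q, s i j)
      ≤ ((A ∩ U).card : ℝ) * ψ ((Q.card : ℝ) * Δ₁) := by
    have := Finset.sum_le_card_nsmul (A ∩ U) (fun i => ψ (∑ j ∈ Q, s i j))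
      (ψ ((Q.card : ℝ) * Δ₁)) ?_
    · simpa [nsmul_eq_mul] using this
    · intro i hi
      apply hψ.monotone
      calc ∑ j ∈ Q, s i j ≤ ∑ _j ∈ Q, Δ₁ :=
            Finset.sum_le_sum (fun j hj => hΔ₁ i (Finset.mem_inter.mp hi).2 j hj)
        _ = (Q.card : ℝ) * Δ₁ := by rw [Finset.sum_const, nsmul_eq_mul]
  have h1 : ∑ i ∈ A, ψ (∑ j ∈ Q, s i j)
      ≤ ((A ∩ T).card : ℝ) * ψ ((Q.card : ℝ) * Δ₂)
        + ((A.card : ℝ) - ((A ∩ T).card : ℝ)) * ψ ((Q.card : ℝ) * Δ₁) := by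
    rw [hcast]
    have hsplit : ∑ i ∈ A, ψ (∑ j ∈ Q, s i j)
        = ∑ i ∈ A ∩ T, ψ (∑ j ∈ Q, s i j) + ∑ i ∈ A ∩ U, ψ (∑ j ∈ Q, s i j) := by
      rw [← Finset.sum_union hd, ← hAeq]
    rw [hsplit]
    exact add_le_add h1T h1U
  have h2 : ∀ i ∈ Q, ψ (∑ j ∈ A, s i j)
      ≤ ψ ((((A ∩ T).card : ℝ) - 1) * Δ₄
          + ((A.card : ℝ) - ((A ∩ T).card : ℝ)) * Δ₃ + A.sup' hA (fun j => s i j)) := by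
    intro i hi
    obtain ⟨k, hk, hk2⟩ := hatt i hi
    apply hψ.monotone
    have hsplit : ∑ j ∈ A, s i j = ∑ j ∈ A ∩ T, s i j + ∑ j ∈ A ∩ U, s i j := by
      rw [← Finset.sum_union hd, ← hAeq]
    have hTsum : ∑ j ∈ A ∩ T, s i j ≤ (((A ∩ T).card : ℝ) - 1) * Δ₄ + s i k := by
      rw [← Finset.add_sum_erase _ _ hk]
      have hb := Finset.sum_le_card_nsmul ((A ∩ T).erase k) (fun j => s i j) Δ₄
        (fun j hj => hΔ₄ i hi j (Finset.mem_of_mem_erase hj))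
      rw [Finset.card_erase_of_mem hk, nsmul_eq_mul, Nat.cast_sub hχ, Nat.cast_one] at hb
      linarith
    have hUsum : ∑ j ∈ A ∩ U, s i j ≤ ((A ∩ U).card : ℝ) * Δ₃ := by
      have hb := Finset.sum_le_card_nsmul (A ∩ U) (fun j => s i j) Δ₃
        (fun j hj => hΔ₃ i hi j hj)
      rw [nsmul_eq_mul] at hb
      exact hb
    rw [hsplit, hcast, ← hk2]
    linarith
  have h2' : ∑ i ∈ Q, ψ (∑ j ∈ A, s i j)
      ≤ ∑ i ∈ Q, ψ ((((A ∩ T).card : ℝ) - 1) * Δ₄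
          + ((A.card : ℝ) - ((A ∩ T).card : ℝ)) * Δ₃ + A.sup' hA (fun j => s i j)) :=
    Finset.sum_le_sum h2
  rw [hI]
  have := mul_le_mul_of_nonneg_left h1 hη.le
  linarith
end

section
/- Suppose χ ≥ 1 and for each i ∈ 𝒬 the maximum max_{j ∈ A} s i j is attained at some element of A ∩ 𝒯. Then I(A;𝒬) ≥ η·( χ·ψ(|𝒬|·γ₂) + (B − χ)·ψ(|𝒬|·γ₁) ) + Σ_{i ∈ 𝒬} ψ( (χ − 1)·γ₄ + (B − χ)·γ₃ + max_{j ∈ A} s i j ). -/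
open Finset

theorem stmt_17
    {ι : Type*} [Fintype ι] [DecidableEq ι]
    (s : ι → ι → ℝ)
    (hs : ∀ i j, s i j ∈ Set.Icc (0:ℝ) 1)
    (hsymm : ∀ i j, s i j = s j i)
    (hself : ∀ i, s i i = 1)
    (T U Q : Finset ι)
    (hTU : Disjoint T U) (hTQ : Disjoint T Q) (hUQ : Disjoint U Q)
    (hQ : Q.Nonempty)
    (A : Finset ι) (hA : A.Nonempty) (hAsub : A ⊆ T ∪ U)
    (η : ℝ) (hη : 0 < η)
    (ψ : ℝ → ℝ) (hψ : StrictMono ψ) (hψc : ConcaveOn ℝ Set.univ ψ)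
    (γ₁ Δ₁ γ₂ Δ₂ : ℝ)
    (hγ₁ : ∀ i ∈ U, ∀ j ∈ Q, γ₁ ≤ s i j)
    (hΔ₁ : ∀ i ∈ U, ∀ j ∈ Q, s i j ≤ Δ₁)
    (hγ₂ : ∀ i ∈ T, ∀ j ∈ Q, γ₂ ≤ s i j)
    (hΔ₂ : ∀ i ∈ T, ∀ j ∈ Q, s i j ≤ Δ₂)
    (γ₃ Δ₃ γ₄ Δ₄ : ℝ)
    (hγ₃ : ∀ i ∈ Q, ∀ j ∈ A ∩ U, γ₃ ≤ s i j)
    (hΔ₃ : ∀ i ∈ Q, ∀ j ∈ A ∩ U, s i j ≤ Δ₃)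
    (hγ₄ : ∀ i ∈ Q, ∀ j ∈ A ∩ T, γ₄ ≤ s i j)
    (hΔ₄ : ∀ i ∈ Q, ∀ j ∈ A ∩ T, s i j ≤ Δ₄)
    (I : ℝ)
    (hI : I = η * ∑ i ∈ A, ψ (∑ j ∈ Q, s i j) + ∑ i ∈ Q, ψ (∑ j ∈ A, s i j))
    (hχ : 1 ≤ (A ∩ T).card)
    (hatt : ∀ i ∈ Q, ∃ k ∈ A ∩ T, s i k = A.sup' hA (fun j => s i j)) :
    I ≥ η * (((A ∩ T).card : ℝ) * ψ ((Q.card : ℝ) * γ₂)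
          + ((A.card : ℝ) - ((A ∩ T).card : ℝ)) * ψ ((Q.card : ℝ) * γ₁))
      + ∑ i ∈ Q, ψ ((((A ∩ T).card : ℝ) - 1) * γ₄
          + ((A.card : ℝ) - ((A ∩ T).card : ℝ)) * γ₃ + A.sup' hA (fun j => s i j)) := by
  classical
  have hmono : Monotone ψ := hψ.monotone
  have hdisj : Disjoint (A ∩ T) (A ∩ U) :=
    hTU.mono (Finset.inter_subset_right) (Finset.inter_subset_right)
  have hunion : (A ∩ T) ∪ (A ∩ U) = A := by
    rw [← Finset.inter_union_distrib_left]
    exact Finset.inter_eq_left.mpr hAsub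
  have hcard : A.card = (A ∩ T).card + (A ∩ U).card := by
    rw [← Finset.card_union_of_disjoint hdisj, hunion]
  have hAUcard : ((A ∩ U).card : ℝ) = (A.card : ℝ) - ((A ∩ T).card : ℝ) := by
    rw [hcard]; push_cast; ring
  -- First sum
  have h1 : η * ∑ i ∈ A, ψ (∑ j ∈ Q, s i j) ≥
      η * (((A ∩ T).card : ℝ) * ψ ((Q.card : ℝ) * γ₂)
        + ((A.card : ℝ) - ((A ∩ T).card : ℝ)) * ψ ((Q.card : ℝ) * γ₁)) := by
    apply mul_le_mul_of_nonneg_left _ hη.le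
    rw [← hAUcard]
    have hsum : ∑ i ∈ A, ψ (∑ j ∈ Q, s i j)
        = ∑ i ∈ A ∩ T, ψ (∑ j ∈ Q, s i j) + ∑ i ∈ A ∩ U, ψ (∑ j ∈ Q, s i j) := by
      rw [← Finset.sum_union hdisj, hunion]
    rw [hsum]
    have hT : ((A ∩ T).card : ℝ) * ψ ((Q.card : ℝ) * γ₂) ≤
        ∑ i ∈ A ∩ T, ψ (∑ j ∈ Q, s i j) := by
      have := Finset.card_nsmul_le_sum (A ∩ T) (fun i => ψ (∑ j ∈ Q, s i j))
        (ψ ((Q.card : ℝ) * γ₂)) ?_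
      · simpa [nsmul_eq_mul] using this
      · intro i hi
        apply hmono
        have := Finset.card_nsmul_le_sum Q (fun j => s i j) γ₂
          (fun j hj => hγ₂ i (Finset.mem_inter.mp hi).2 j hj)
        simpa [nsmul_eq_mul] using this
    have hU : ((A ∩ U).card : ℝ) * ψ ((Q.card : ℝ) * γ₁) ≤
        ∑ i ∈ A ∩ U, ψ (∑ j ∈ Q, s i j) := by
      have := Finset.card_nsmul_le_sum (A ∩ U) (fun i => ψ (∑ j ∈ Q, s i j))
        (ψ ((Q.card : ℝ) * γ₁)) ?_
      · simpa [nsmul_eq_mul] using this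
      · intro i hi
        apply hmono
        have := Finset.card_nsmul_le_sum Q (fun j => s i j) γ₁
          (fun j hj => hγ₁ i (Finset.mem_inter.mp hi).2 j hj)
        simpa [nsmul_eq_mul] using this
    linarith
  -- Second sum
  have h2 : ∑ i ∈ Q, ψ (∑ j ∈ A, s i j) ≥
      ∑ i ∈ Q, ψ ((((A ∩ T).card : ℝ) - 1) * γ₄
        + ((A.card : ℝ) - ((A ∩ T).card : ℝ)) * γ₃ + A.sup' hA (fun j => s i j)) := by
    apply Finset.sum_le_sum
    intro i hi
    obtain ⟨k, hk, hke⟩ := hatt i hi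
    have hkA : k ∈ A := (Finset.mem_inter.mp hk).1
    have hkU : k ∉ A ∩ U := fun h =>
      (Finset.disjoint_left.mp hdisj hk) h
    apply hmono
    have hsplit : ∑ j ∈ A, s i j = ∑ j ∈ A.erase k, s i j + s i k :=
      (Finset.sum_erase_add A _ hkA).symm
    have herase : A.erase k = (A ∩ T).erase k ∪ (A ∩ U) := by
      conv_lhs => rw [← hunion]
      rw [Finset.erase_union_distrib, Finset.erase_eq_of_notMem hkU]
    have hdisj2 : Disjoint ((A ∩ T).erase k) (A ∩ U) :=
      hdisj.mono_left (Finset.erase_subset _ _)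
    have hcT : (((A ∩ T).erase k).card : ℝ) = ((A ∩ T).card : ℝ) - 1 := by
      rw [Finset.card_erase_of_mem hk]
      have : 1 ≤ (A ∩ T).card := hχ
      push_cast [Nat.cast_sub this]
      ring
    have hbT : (((A ∩ T).card : ℝ) - 1) * γ₄ ≤ ∑ j ∈ (A ∩ T).erase k, s i j := by
      have := Finset.card_nsmul_le_sum ((A ∩ T).erase k) (fun j => s i j) γ₄
        (fun j hj => hγ₄ i hi j (Finset.mem_of_mem_erase hj))
      rw [← hcT]
      simpa [nsmul_eq_mul] using this
    have hbU : ((A.card : ℝ) - ((A ∩ T).card : ℝ)) * γ₃ ≤ ∑ j ∈ A ∩ U, s i j := by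
      have := Finset.card_nsmul_le_sum (A ∩ U) (fun j => s i j) γ₃
        (fun j hj => hγ₃ i hi j hj)
      rw [← hAUcard]
      simpa [nsmul_eq_mul] using this
    rw [hsplit, herase, Finset.sum_union hdisj2, ← hke]
    linarith
  rw [hI]
  linarith
end
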